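/- Let m ≥ 3 be odd and let d be an integer with gcd(d, 2^m - 1) = 1 such that the power function x ↦ x^d on F = GF(2^m) is maximum nonlinear. Assume that for all α, β ∈ F \ {0} with α ≠ β and all i, j ∈ GF(2) the cardinality |H^{i,j}(α,β) ∩ D_d| belongs to {2^(m-3), 2^(m-3) - 2^((m-3)/2), 2^(m-3) + 2^((m-3)/2)}. Then for every α ∈ F: Σ_{x ∈ F} (-1)^(tr(αx + x^d)) ≠ 0 if and only if tr(α) = 1. -/

import Mathlib

attribute [local instance] Classical.propDecidable

noncomputable instance (m : ℕ) : Fintype (GaloisField 2 m) := Fintype.ofFinite _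

/-- The absolute trace map from `GF(2^m)` to `GF(2)`. -/
noncomputable def tr (m : ℕ) (x : GaloisField 2 m) : ZMod 2 :=
  Algebra.trace (ZMod 2) (GaloisField 2 m) x

/-- `(-1)^t` as an integer, for `t ∈ GF(2)`. -/
def chi (t : ZMod 2) : ℤ := (-1) ^ t.val

/-- The Walsh coefficient `∑_{x ∈ F} (-1)^(tr(γx + βx^d))` of the power map `x ↦ x^d`. -/
noncomputable def walsh (m d : ℕ) (β γ : GaloisField 2 m) : ℤ :=
  ∑ x : GaloisField 2 m, chi (tr m (γ * x + β * x ^ d))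

/-- The power function `x ↦ x^d` on `GF(2^m)` is maximum nonlinear (almost bent). -/
def MaxNonlinear (m d : ℕ) : Prop :=
  ∀ β : GaloisField 2 m, β ≠ 0 → ∀ γ : GaloisField 2 m,
    walsh m d β γ ∈ ({0, 2 ^ ((m + 1) / 2), -(2 ^ ((m + 1) / 2))} : Set ℤ)

/-- `D_d = {x ∈ F : tr(x^d) = 1}`. -/
noncomputable def Dd (m d : ℕ) : Finset (GaloisField 2 m) :=
  Finset.univ.filter (fun x => tr m (x ^ d) = 1)

/-- `H^i(α) = {x ∈ F : tr(αx) = i}`. -/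
noncomputable def Hi (m : ℕ) (α : GaloisField 2 m) (i : ZMod 2) :
    Finset (GaloisField 2 m) :=
  Finset.univ.filter (fun x => tr m (α * x) = i)

/-- `H^{i,j}(α,β) = {x ∈ F : tr(αx) = i and tr(βx) = j}`. -/
noncomputable def Hij (m : ℕ) (α β : GaloisField 2 m) (i j : ZMod 2) :
    Finset (GaloisField 2 m) :=
  Finset.univ.filter (fun x => tr m (α * x) = i ∧ tr m (β * x) = j)

/-!
Write `W γ = ∑ₓ (-1)^tr(γx + x^d)`. Since `x ↦ x^d` permutes `F`, `W 0 = 0` and `|D_d| = 2^(m-1)`;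
for `γ ≠ 0` one gets `W γ = 4 |{x ∈ D_d | tr(γx) = 1}| - 2^m`, and hence for distinct nonzero
`α, β`, counting over `D_d`,
  `W α + W β + W (α + β) = 2^m - 8 |H^{0,0}(α,β) ∩ D_d|`.
Almost bentness puts every `W γ` in `{0, ±2^((m+1)/2)}` and the intersection hypothesis puts the
triple sum in `{0, ±2^((m+3)/2)}`, so an even number of the three coefficients is nonzero: the
indicator `s γ` of `W γ ≠ 0` is additive. By nondegeneracy of the trace form, `s = tr(c ·)` for
some `c`; `W (γ^2) = W γ` forces `c^2 = c`, and `c ≠ 0` because `∑_γ W γ = 2^m`. Hence `s = tr`.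
-/

open Finset

section Chi

variable {ι : Type*}

lemma chi_zero : chi 0 = 1 := rfl

lemma chi_one : chi 1 = -1 := rfl

lemma chi_add : ∀ s t : ZMod 2, chi (s + t) = chi s * chi t := by decide

lemma chi_eq_one_sub : ∀ t : ZMod 2, chi t = 1 - 2 * if t = 1 then 1 else 0 := by decide

lemma sum_chi (s : Finset ι) (g : ι → ZMod 2) :
    ∑ x ∈ s, chi (g x) = #s - 2 * #{x ∈ s | g x = 1} := by
  simp only [chi_eq_one_sub, sum_sub_distrib, ← mul_sum, card_filter, sum_const, nsmul_eq_mul,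
    mul_one]
  push_cast
  rfl

lemma card_filter_eq_one_add_add (s : Finset ι) (f g : ι → ZMod 2) :
    #{x ∈ s | f x = 1} + #{x ∈ s | g x = 1} + #{x ∈ s | f x + g x = 1}
      + 2 * #{x ∈ s | f x = 0 ∧ g x = 0} = 2 * #s := by
  have hpointwise : ∀ a b : ZMod 2, ((if a = 1 then 1 else 0) + (if b = 1 then 1 else 0)
      + (if a + b = 1 then 1 else 0) + 2 * (if a = 0 ∧ b = 0 then 1 else 0) : ℕ) = 2 := by
    decide
  simp only [card_filter, mul_sum, ← sum_add_distrib, hpointwise, sum_const, smul_eq_mul, mul_comm]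

end Chi

def nonzeroBit (w : ℤ) : ZMod 2 := if w = 0 then 0 else 1

lemma nonzeroBit_eq_one_iff {w : ℤ} : nonzeroBit w = 1 ↔ w ≠ 0 := by
  unfold nonzeroBit
  split_ifs with h <;> simp [h]

lemma nonzeroBit_add_of_mem {t a b c : ℤ} (ht : t ≠ 0) (ha : a ∈ ({0, t, -t} : Set ℤ))
    (hb : b ∈ ({0, t, -t} : Set ℤ)) (hc : c ∈ ({0, t, -t} : Set ℤ))
    (habc : a + b + c ∈ ({0, 2 * t, -(2 * t)} : Set ℤ)) :
    nonzeroBit c = nonzeroBit a + nonzeroBit b := by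
  -- an odd number of nonzero terms would make `a + b + c` an odd multiple of `t`
  simp only [Set.mem_insert_iff, Set.mem_singleton_iff] at ha hb hc habc
  rcases ha with rfl | rfl | rfl <;> rcases hb with rfl | rfl | rfl <;>
    rcases hc with rfl | rfl | rfl <;> (unfold nonzeroBit; split_ifs <;> first | decide | omega)

lemma nonzeroBit_add {R : Type*} [Ring R] [CharP R 2] {W : R → ℤ} {t : ℤ} (ht : t ≠ 0)
    (hW0 : W 0 = 0) (hW : ∀ γ, W γ ∈ ({0, t, -t} : Set ℤ))
    (hWsum : ∀ α β, α ≠ 0 → β ≠ 0 → α ≠ β →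
      W α + W β + W (α + β) ∈ ({0, 2 * t, -(2 * t)} : Set ℤ))
    (α β : R) : nonzeroBit (W (α + β)) = nonzeroBit (W α) + nonzeroBit (W β) := by
  have hbit0 : nonzeroBit (W 0) = 0 := by rw [hW0]; rfl
  rcases eq_or_ne α 0 with rfl | hα
  · rw [zero_add, hbit0, zero_add]
  rcases eq_or_ne β 0 with rfl | hβ
  · rw [add_zero, hbit0, add_zero]
  rcases eq_or_ne α β with rfl | hαβ
  · rw [CharTwo.add_self_eq_zero, CharTwo.add_self_eq_zero, hbit0]
  exact nonzeroBit_add_of_mem ht (hW α) (hW β) (hW _) (hWsum α β hα hβ hαβ)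

section Trace

variable {m : ℕ}

lemma tr_zero : tr m 0 = 0 := map_zero _

lemma tr_add (x y : GaloisField 2 m) : tr m (x + y) = tr m x + tr m y := map_add _ x y

lemma tr_sq (x : GaloisField 2 m) : tr m (x ^ 2) = tr m x := by
  have := Algebra.trace_eq_of_algEquiv
    (FiniteField.frobeniusAlgEquivOfAlgebraic (ZMod 2) (GaloisField 2 m)) x
  rwa [FiniteField.coe_frobeniusAlgEquivOfAlgebraic, ZMod.card] at this

lemma sq_bijective : Function.Bijective fun x : GaloisField 2 m => x ^ 2 :=
  bijective_frobenius (GaloisField 2 m) 2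

lemma eq_zero_of_forall_tr_mul_eq_zero {γ : GaloisField 2 m} (h : ∀ y, tr m (γ * y) = 0) :
    γ = 0 :=
  (traceForm_nondegenerate (ZMod 2) (GaloisField 2 m)).1 γ h

lemma exists_tr_mul_eq_one {γ : GaloisField 2 m} (hγ : γ ≠ 0) : ∃ y, tr m (γ * y) = 1 := by
  have zmod_two : ∀ t : ZMod 2, t ≠ 1 → t = 0 := by decide
  by_contra! h
  exact hγ <| eq_zero_of_forall_tr_mul_eq_zero fun y => zmod_two _ (h y)

lemma sum_chi_tr_mul {γ : GaloisField 2 m} (hγ : γ ≠ 0) :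
    ∑ x : GaloisField 2 m, chi (tr m (γ * x)) = 0 := by
  obtain ⟨y, hy⟩ := exists_tr_mul_eq_one hγ
  have hshift := Fintype.sum_equiv (Equiv.addRight y) (fun x => chi (tr m (γ * x)))
    (fun x => - chi (tr m (γ * x))) fun x => by
      rw [Equiv.coe_addRight, mul_add, tr_add, hy, chi_add, chi_one]
      ring
  rw [sum_neg_distrib] at hshift
  omega

lemma exists_tr_mul_eq (f : GaloisField 2 m →+ ZMod 2) : ∃ c, ∀ x, tr m (c * x) = f x := by
  have hnd := traceForm_nondegenerate (ZMod 2) (GaloisField 2 m)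
  exact ⟨(LinearMap.BilinForm.toDual _ hnd).symm (f.toZModLinearMap 2),
    LinearMap.BilinForm.apply_toDual_symm_apply (hB := hnd) _⟩

lemma eq_tr_of_map_sq {f : GaloisField 2 m →+ ZMod 2} (hsq : ∀ x, f (x ^ 2) = f x)
    (hf : f ≠ 0) (x : GaloisField 2 m) : f x = tr m x := by
  obtain ⟨c, hc⟩ := exists_tr_mul_eq f
  have hc_idem : c * (c + 1) = 0 := eq_zero_of_forall_tr_mul_eq_zero fun y => by
    obtain ⟨z, rfl⟩ := sq_bijective.2 y
    rw [mul_add_one, add_mul, tr_add, show c * c * z ^ 2 = (c * z) ^ 2 by ring, tr_sq, hc, hc,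
      hsq, CharTwo.add_self_eq_zero]
  obtain hc0 | hc1 := mul_eq_zero.1 hc_idem
  · exact absurd (AddMonoidHom.ext fun y => by rw [← hc, hc0, zero_mul]; exact map_zero _) hf
  · rw [← hc, (add_eq_zero_iff_eq_neg.1 hc1).trans (CharTwo.neg_eq 1), one_mul]

end Trace

lemma FiniteField.pow_injective_of_coprime {K : Type*} [Field K] [Fintype K] {d : ℕ} (hd : d ≠ 0)
    (hcop : Nat.Coprime d (Fintype.card K - 1)) : Function.Injective fun x : K => x ^ d := by
  intro x y hxy
  simp only at hxy
  rcases eq_or_ne y 0 with rfl | hy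
  · simpa [zero_pow hd, hd] using hxy
  have hx : x ≠ 0 := by rintro rfl; simp [zero_pow hd, hy, eq_comm] at hxy
  have h1 : (x / y) ^ d = 1 := by rw [div_pow, hxy, div_self (pow_ne_zero d hy)]
  have h2 : (x / y) ^ (Fintype.card K - 1) = 1 :=
    FiniteField.pow_card_sub_one_eq_one _ (div_ne_zero hx hy)
  have := pow_gcd_eq_one.2 ⟨h1, h2⟩
  rwa [hcop, pow_one, div_eq_one_iff_eq hy] at this

section Walsh

variable {m d : ℕ}

lemma walsh_one_apply (γ : GaloisField 2 m) :
    walsh m d 1 γ = ∑ x, chi (tr m (γ * x)) * chi (tr m (x ^ d)) := by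
  simp only [walsh, one_mul, tr_add, chi_add]

lemma walsh_one_sq (γ : GaloisField 2 m) : walsh m d 1 (γ ^ 2) = walsh m d 1 γ := by
  refine (Fintype.sum_bijective _ sq_bijective _ _ fun x => ?_).symm
  rw [one_mul, one_mul, ← pow_mul, mul_comm 2 d, pow_mul, ← mul_pow, ← CharTwo.add_sq, tr_sq]

lemma sum_walsh_one (hd : d ≠ 0) :
    ∑ γ, walsh m d 1 γ = Fintype.card (GaloisField 2 m) := by
  simp only [walsh_one_apply, sum_comm (γ := GaloisField 2 m), ← sum_mul]
  rw [sum_eq_single 0 (fun x _ hx => by simp only [mul_comm _ x, sum_chi_tr_mul hx, zero_mul])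
    (by simp)]
  simp [tr_zero, chi_zero, zero_pow hd]

lemma sum_chi_tr_pow (hpow : Function.Bijective fun x : GaloisField 2 m => x ^ d) :
    ∑ x : GaloisField 2 m, chi (tr m (x ^ d)) = 0 := by
  rw [Fintype.sum_bijective _ hpow _ (fun y => chi (tr m y)) fun x => rfl]
  simpa using sum_chi_tr_mul (one_ne_zero (α := GaloisField 2 m))

lemma two_mul_card_Dd (hpow : Function.Bijective fun x : GaloisField 2 m => x ^ d) :
    2 * #(Dd m d) = Fintype.card (GaloisField 2 m) := by
  have := sum_chi univ fun x : GaloisField 2 m => tr m (x ^ d)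
  rw [sum_chi_tr_pow hpow] at this
  change (0 : ℤ) = #univ - 2 * #(Dd m d) at this
  rw [card_univ] at this
  omega

lemma walsh_one_zero (hpow : Function.Bijective fun x : GaloisField 2 m => x ^ d) :
    walsh m d 1 (0 : GaloisField 2 m) = 0 := by
  simpa [walsh_one_apply, tr_zero, chi_zero] using sum_chi_tr_pow hpow

lemma walsh_one_eq (hpow : Function.Bijective fun x : GaloisField 2 m => x ^ d)
    {γ : GaloisField 2 m} (hγ : γ ≠ 0) :
    walsh m d 1 γ = 4 * #{x ∈ Dd m d | tr m (γ * x) = 1} - Fintype.card (GaloisField 2 m) := by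
  have hsplit : ∀ x, chi (tr m (γ * x)) * chi (tr m (x ^ d))
      = chi (tr m (γ * x)) - 2 * if x ∈ Dd m d then chi (tr m (γ * x)) else 0 := by
    intro x
    rw [chi_eq_one_sub (tr m (x ^ d))]
    by_cases h : tr m (x ^ d) = 1 <;>
      simp only [Dd, mem_filter, mem_univ, true_and, h, ↓reduceIte] <;> ring
  have hD := two_mul_card_Dd hpow
  rw [walsh_one_apply, sum_congr rfl fun x _ => hsplit x, sum_sub_distrib, ← mul_sum, sum_ite_mem,
    univ_inter, sum_chi_tr_mul hγ, sum_chi]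
  push_cast [← hD]
  ring

lemma walsh_one_add_add (hpow : Function.Bijective fun x : GaloisField 2 m => x ^ d)
    {α β : GaloisField 2 m} (hα : α ≠ 0) (hβ : β ≠ 0) (hαβ : α ≠ β) :
    walsh m d 1 α + walsh m d 1 β + walsh m d 1 (α + β)
      = Fintype.card (GaloisField 2 m) - 8 * #(Hij m α β 0 0 ∩ Dd m d) := by
  have hαβ' : α + β ≠ 0 := fun h => hαβ (CharTwo.add_eq_zero.1 h)
  have hHij : Hij m α β 0 0 ∩ Dd m d = {x ∈ Dd m d | tr m (α * x) = 0 ∧ tr m (β * x) = 0} := by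
    ext x
    simp only [Hij, Dd, mem_inter, mem_filter, mem_univ, true_and]
    tauto
  have hcount := card_filter_eq_one_add_add (Dd m d) (fun x => tr m (α * x)) (fun x => tr m (β * x))
  have hD := two_mul_card_Dd hpow
  simp only [walsh_one_eq hpow hα, walsh_one_eq hpow hβ, walsh_one_eq hpow hαβ', add_mul, tr_add,
    hHij]
  omega

lemma card_galoisField_two (hm : m ≠ 0) : Fintype.card (GaloisField 2 m) = 2 ^ m := by
  rw [← Nat.card_eq_fintype_card, GaloisField.card 2 m hm]

lemma walsh_one_mem {k : ℕ} (hk : m = 2 * k + 3) (hmax : MaxNonlinear m d) (γ : GaloisField 2 m) :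
    walsh m d 1 γ ∈ ({0, 2 ^ (k + 2), -2 ^ (k + 2)} : Set ℤ) := by
  simpa [show (m + 1) / 2 = k + 2 by omega] using hmax 1 one_ne_zero γ

lemma walsh_one_add_add_mem {k : ℕ} (hk : m = 2 * k + 3)
    (hpow : Function.Bijective fun x : GaloisField 2 m => x ^ d)
    {α β : GaloisField 2 m} (hα : α ≠ 0) (hβ : β ≠ 0) (hαβ : α ≠ β)
    (hcount : (#(Hij m α β 0 0 ∩ Dd m d) : ℤ) ∈
      ({2 ^ (m - 3), 2 ^ (m - 3) - 2 ^ ((m - 3) / 2), 2 ^ (m - 3) + 2 ^ ((m - 3) / 2)} : Set ℤ)) :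
    walsh m d 1 α + walsh m d 1 β + walsh m d 1 (α + β) ∈
      ({0, 2 * 2 ^ (k + 2), -(2 * 2 ^ (k + 2))} : Set ℤ) := by
  rw [walsh_one_add_add hpow hα hβ hαβ, card_galoisField_two (by omega)]
  simp only [show m - 3 = 2 * k by omega, show 2 * k / 2 = k by omega,
    Set.mem_insert_iff, Set.mem_singleton_iff] at hcount ⊢
  push_cast
  have h8 : (2 : ℤ) ^ m = 8 * 2 ^ k * 2 ^ k := by rw [hk]; ring
  rcases hcount with h | h | h
  · left; rw [h, h8]; ring
  · right; left; rw [h, h8]; ring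
  · right; right; rw [h, h8]; ring

lemma nonzeroBit_walsh_one_eq_tr (hd : d ≠ 0)
    (hadd : ∀ α β : GaloisField 2 m, nonzeroBit (walsh m d 1 (α + β))
      = nonzeroBit (walsh m d 1 α) + nonzeroBit (walsh m d 1 β))
    (α : GaloisField 2 m) : nonzeroBit (walsh m d 1 α) = tr m α := by
  let f : GaloisField 2 m →+ ZMod 2 := AddMonoidHom.mk' (fun γ => nonzeroBit (walsh m d 1 γ)) hadd
  have hf : f ≠ 0 := by
    obtain ⟨γ, -, hγ⟩ := exists_ne_zero_of_sum_ne_zero (s := univ) (f := walsh m d 1)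
      (by rw [sum_walsh_one hd]; positivity)
    have hfγ : f γ = 1 := nonzeroBit_eq_one_iff.2 hγ
    exact fun h => zero_ne_one ((DFunLike.congr_fun h γ).symm.trans hfγ)
  exact eq_tr_of_map_sq (f := f) (fun γ => congrArg nonzeroBit (walsh_one_sq γ)) hf α

end Walsh

/-- Under the hypotheses of the main theorem (maximum nonlinear power map with
the three codimension-2 intersection sizes), the Walsh coefficient
`∑_x (-1)^(tr(αx + x^d))` is nonzero exactly when `tr(α) = 1`. -/
theorem stmt9 (m : ℕ) (hm3 : 3 ≤ m) (hmodd : Odd m) (d : ℕ)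
    (hgcd : Nat.gcd d (2 ^ m - 1) = 1) (hmax : MaxNonlinear m d)
    (hinter : ∀ α β : GaloisField 2 m, α ≠ 0 → β ≠ 0 → α ≠ β → ∀ i j : ZMod 2,
      ((Hij m α β i j ∩ Dd m d).card : ℤ) ∈
        ({2 ^ (m - 3), 2 ^ (m - 3) - 2 ^ ((m - 3) / 2),
          2 ^ (m - 3) + 2 ^ ((m - 3) / 2)} : Set ℤ)) :
    ∀ α : GaloisField 2 m,
      (∑ x : GaloisField 2 m, chi (tr m (α * x + x ^ d))) ≠ 0 ↔ tr m α = 1 := by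
  obtain ⟨k, hk⟩ : ∃ k, m = 2 * k + 3 := by obtain ⟨j, rfl⟩ := hmodd; exact ⟨j - 1, by omega⟩
  have hd : d ≠ 0 := by
    rintro rfl
    have : 2 ^ 3 ≤ 2 ^ m := Nat.pow_le_pow_right two_pos hm3
    rw [Nat.gcd_zero_left] at hgcd
    omega
  have hpow : Function.Bijective fun x : GaloisField 2 m => x ^ d :=
    Finite.injective_iff_bijective.1 <|
      FiniteField.pow_injective_of_coprime hd (card_galoisField_two (m := m) (by omega) ▸ hgcd)
  have hadd := nonzeroBit_add (by positivity) (walsh_one_zero hpow) (walsh_one_mem hk hmax)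
    fun α β hα hβ hαβ => walsh_one_add_add_mem hk hpow hα hβ hαβ (hinter α β hα hβ hαβ 0 0)
  intro α
  rw [← nonzeroBit_walsh_one_eq_tr hd hadd α, nonzeroBit_eq_one_iff]
  simp only [walsh, one_mul]
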